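/- arXiv:2605.22507 — 2 statements merged into one kernel-verified Lean document; each statement's English description precedes it below -/
import Mathlib

section
/- Let d ≥ 1, H ∈ ℕ, and let μ_src and μ_tgt be Borel probability measures on ℝ^d with finite second moments. Let π⋆_0,…,π⋆_H : ℝ^d → ℝ^d be measurable maps feasible for transporting μ_src to μ_tgt whose dynamic cost equals W₂²(μ_src, μ_tgt). Define μ⋆_h := (π̄⋆_{h−1}, π̄⋆_h)_# μ_src for h = 0,…,H (with π̄⋆_{−1} := id). Then (μ⋆_0,…,μ⋆_H) is feasible for the dynamic primal LP with source μ_src and target μ_tgt, and its cost equals W₂²(μ_src, μ_tgt), so it is an optimal solution. -/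
/-!
Feasibility of the occupancy family and the value of its cost are marginal computations for the
pushforwards `(π̄_{h-1}, π̄_h)_# μsrc`. Optimality is weak duality: gluing the couplings of any
feasible family along their shared marginals (disintegration) and applying the two-term Sedrakyan
inequality `‖x - z‖² / (p + q) ≤ ‖x - y‖² / p + ‖y - z‖² / q` with weights `p = n + 1`, `q = 1`
at the `n`-th step produces a coupling of `μsrc` and `μtgt` whose cost is at most `H + 1` times
the sum of the step costs. Hence `W₂²(μsrc, μtgt)` bounds the LP cost of every feasible family,
and the optimal policy's family attains it.
-/

open MeasureTheory ENNReal

/-- The squared Wasserstein-2 distance. -/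
noncomputable def W2sq {d : ℕ} (μ ν : Measure (EuclideanSpace ℝ (Fin d))) : ℝ≥0∞ :=
  ⨅ (γ : Measure (EuclideanSpace ℝ (Fin d) × EuclideanSpace ℝ (Fin d)))
    (_ : IsProbabilityMeasure γ ∧ γ.map Prod.fst = μ ∧ γ.map Prod.snd = ν),
      2⁻¹ * ∫⁻ p, (‖p.1 - p.2‖₊ : ℝ≥0∞) ^ 2 ∂γ

/-- `trajComp π h = π̄_{h-1} = π_{h-1} ∘ ⋯ ∘ π_0`, with `trajComp π 0 = π̄_{-1} = id`. -/
def trajComp {α : Type*} (π : ℕ → α → α) : ℕ → α → α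
  | 0 => id
  | n + 1 => π n ∘ trajComp π n

/-- Feasibility for the dynamic primal LP with horizon `H`, source `μsrc`, target `μtgt`. -/
def LPfeasible {d : ℕ} (H : ℕ) (μsrc μtgt : Measure (EuclideanSpace ℝ (Fin d)))
    (μ : Fin (H + 1) → Measure (EuclideanSpace ℝ (Fin d) × EuclideanSpace ℝ (Fin d))) : Prop :=
  (∀ h, IsProbabilityMeasure (μ h)) ∧
  (μ 0).map Prod.fst = μsrc ∧
  (∀ h : Fin H, (μ h.castSucc).map Prod.snd = (μ h.succ).map Prod.fst) ∧
  (μ (Fin.last H)).map Prod.snd = μtgt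

/-- The cost of a family in the dynamic primal LP: `((H+1)/2) Σ_h ∫ ‖x-y‖² dμ_h`. -/
noncomputable def LPcost {d : ℕ} (H : ℕ)
    (μ : Fin (H + 1) → Measure (EuclideanSpace ℝ (Fin d) × EuclideanSpace ℝ (Fin d))) : ℝ≥0∞ :=
  ((H : ℝ≥0∞) + 1) / 2 * ∑ h, ∫⁻ p, (‖p.1 - p.2‖₊ : ℝ≥0∞) ^ 2 ∂(μ h)

open ProbabilityTheory
open scoped NNReal

lemma nnnorm_sub_sq_div_add_le {E : Type*} [SeminormedAddCommGroup E] (x y z : E)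
    {p q : ℝ≥0} (hp : 0 < p) (hq : 0 < q) :
    ‖x - z‖₊ ^ 2 / (p + q) ≤ ‖x - y‖₊ ^ 2 / p + ‖y - z‖₊ ^ 2 / q := by
  have hsedrakyan := Finset.sq_sum_div_le_sum_sq_div Finset.univ ![‖x - y‖₊, ‖y - z‖₊]
    (g := ![p, q]) (by simp [Fin.forall_fin_two, hp, hq])
  simp only [Fin.sum_univ_two, Matrix.cons_val_zero, Matrix.cons_val_one] at hsedrakyan
  refine le_trans ?_ hsedrakyan
  gcongr
  simpa only [sub_add_sub_cancel] using nnnorm_add_le (x - y) (y - z)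

lemma coe_nnnorm_sub_sq_div_add_le {E : Type*} [SeminormedAddCommGroup E] (x y z : E)
    {p q : ℝ≥0} (hp : 0 < p) (hq : 0 < q) :
    (‖x - z‖₊ : ℝ≥0∞) ^ 2 / (p + q) ≤ (‖x - y‖₊ : ℝ≥0∞) ^ 2 / p + (‖y - z‖₊ : ℝ≥0∞) ^ 2 / q := by
  have h := ENNReal.coe_le_coe.2 (nnnorm_sub_sq_div_add_le x y z hp hq)
  rwa [ENNReal.coe_add, ENNReal.coe_div hp.ne', ENNReal.coe_div hq.ne',
    ENNReal.coe_div (add_pos hp hq).ne'] at h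

lemma lintegral_div_const {α : Type*} [MeasurableSpace α] (μ : Measure α) (f : α → ℝ≥0∞)
    {c : ℝ≥0∞} (hc : c ≠ 0) : ∫⁻ a, f a / c ∂μ = (∫⁻ a, f a ∂μ) / c := by
  simp only [div_eq_mul_inv]
  exact lintegral_mul_const' _ _ (ENNReal.inv_ne_top.2 hc)

lemma exists_gluing {E : Type*} [MeasurableSpace E] [StandardBorelSpace E] [Nonempty E]
    (γ ν : Measure (E × E)) [IsProbabilityMeasure γ] [IsFiniteMeasure ν]
    (hmatch : γ.map Prod.snd = ν.map Prod.fst) :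
    ∃ ρ : Measure ((E × E) × E), IsProbabilityMeasure ρ ∧
      ρ.map Prod.fst = γ ∧ ρ.map (fun q => (q.1.2, q.2)) = ν := by
  -- `ρ` draws `(x, y) ∼ γ`, then `z` from the conditional law of `ν` given first coordinate `y`.
  set κ := ν.condKernel.comap Prod.snd measurable_snd
  refine ⟨γ ⊗ₘ κ, inferInstance, Measure.fst_compProd γ κ, ?_⟩
  ext s hs
  have hproj : Measurable fun q : (E × E) × E => (q.1.2, q.2) :=
    measurable_fst.snd.prodMk measurable_snd
  rw [Measure.map_apply hproj hs, Measure.compProd_apply (hproj hs)]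
  change ∫⁻ p, ν.condKernel p.2 (Prod.mk p.2 ⁻¹' s) ∂γ = ν s
  rw [← lintegral_map (Kernel.measurable_kernel_prodMk_left hs) measurable_snd, hmatch,
    ← Measure.fst, ← Measure.compProd_apply hs, ν.disintegrate ν.condKernel]

noncomputable def transportCost {E : Type*} [SeminormedAddCommGroup E] [MeasurableSpace E]
    (γ : Measure (E × E)) : ℝ≥0∞ :=
  ∫⁻ p, (‖p.1 - p.2‖₊ : ℝ≥0∞) ^ 2 ∂γ

section TransportCost

variable {E : Type*} [NormedAddCommGroup E] [MeasurableSpace E] [BorelSpace E]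
  [SecondCountableTopology E]

lemma measurable_nnnorm_sub_sq {α : Type*} [MeasurableSpace α] {f g : α → E}
    (hf : Measurable f) (hg : Measurable g) :
    Measurable fun a => (‖f a - g a‖₊ : ℝ≥0∞) ^ 2 :=
  ((hf.sub hg).nnnorm.coe_nnreal_ennreal).pow_const 2

lemma transportCost_map {α : Type*} [MeasurableSpace α] (μ : Measure α) {f g : α → E}
    (hf : Measurable f) (hg : Measurable g) :
    transportCost (μ.map fun a => (f a, g a)) = ∫⁻ a, (‖f a - g a‖₊ : ℝ≥0∞) ^ 2 ∂μ :=
  lintegral_map (measurable_nnnorm_sub_sq measurable_fst measurable_snd) (hf.prodMk hg)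

variable [StandardBorelSpace E]

lemma exists_coupling_transportCost_div_add_le
    (γ ν : Measure (E × E)) [IsProbabilityMeasure γ] [IsFiniteMeasure ν]
    (hmatch : γ.map Prod.snd = ν.map Prod.fst) {p q : ℝ≥0} (hp : 0 < p) (hq : 0 < q) :
    ∃ γ' : Measure (E × E), IsProbabilityMeasure γ' ∧
      γ'.map Prod.fst = γ.map Prod.fst ∧ γ'.map Prod.snd = ν.map Prod.snd ∧
      transportCost γ' / (p + q) ≤ transportCost γ / p + transportCost ν / q := by
  obtain ⟨ρ, hρ, rfl, rfl⟩ := exists_gluing γ ν hmatch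
  have h₁ : Measurable fun q : (E × E) × E => q.1.1 := measurable_fst.fst
  have h₂ : Measurable fun q : (E × E) × E => q.1.2 := measurable_fst.snd
  refine ⟨ρ.map fun q => (q.1.1, q.2), Measure.isProbabilityMeasure_map (by fun_prop), ?_, ?_, ?_⟩
  · rw [Measure.map_map measurable_fst (by fun_prop), Measure.map_map measurable_fst (by fun_prop)]
    rfl
  · rw [Measure.map_map measurable_snd (by fun_prop), Measure.map_map measurable_snd (by fun_prop)]
    rfl
  · have hfst : ρ.map Prod.fst = ρ.map fun q => (q.1.1, q.1.2) := rfl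
    rw [hfst, transportCost_map ρ h₁ measurable_snd, transportCost_map ρ h₁ h₂,
      transportCost_map ρ h₂ measurable_snd, ← lintegral_div_const _ _ (by simp [hp.ne']),
      ← lintegral_div_const _ _ (by simp [hp.ne']), ← lintegral_div_const _ _ (by simp [hq.ne']),
      ← lintegral_add_left ((measurable_nnnorm_sub_sq h₁ h₂).div_const _)]
    exact lintegral_mono fun q => coe_nnnorm_sub_sq_div_add_le _ _ _ hp hq

theorem exists_coupling_transportCost_le_of_chain :
    ∀ (n : ℕ) (ν : Fin (n + 1) → Measure (E × E)), (∀ i, IsProbabilityMeasure (ν i)) →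
    (∀ i : Fin n, (ν i.castSucc).map Prod.snd = (ν i.succ).map Prod.fst) →
    ∃ γ : Measure (E × E), IsProbabilityMeasure γ ∧ γ.map Prod.fst = (ν 0).map Prod.fst ∧
      γ.map Prod.snd = (ν (Fin.last n)).map Prod.snd ∧
      transportCost γ / (n + 1) ≤ ∑ i, transportCost (ν i)
  | 0, ν, hprob, _ => ⟨ν 0, hprob 0, rfl, rfl, by simp⟩
  | n + 1, ν, hprob, hchain => by
    obtain ⟨γ, hγ, hfst, hsnd, hcost⟩ := exists_coupling_transportCost_le_of_chain n
      (fun i => ν i.castSucc) (fun i => hprob _) fun i => by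
        simpa only [Fin.succ_castSucc] using hchain i.castSucc
    have hmatch : γ.map Prod.snd = (ν (Fin.last (n + 1))).map Prod.fst := by
      rw [hsnd, hchain (Fin.last n), Fin.succ_last]
    obtain ⟨γ', hγ', hfst', hsnd', hcost'⟩ :=
      exists_coupling_transportCost_div_add_le γ _ hmatch (p := n + 1) (q := 1)
        (by positivity) one_pos
    refine ⟨γ', hγ', hfst'.trans hfst, hsnd', ?_⟩
    rw [Fin.sum_univ_castSucc, Nat.cast_succ]
    push_cast at hcost'
    rw [div_one] at hcost'
    exact hcost'.trans (add_le_add_left hcost _)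

end TransportCost

section Euclidean

variable {d : ℕ}

lemma W2sq_le_transportCost {μ ν : Measure (EuclideanSpace ℝ (Fin d))}
    (γ : Measure (EuclideanSpace ℝ (Fin d) × EuclideanSpace ℝ (Fin d))) [IsProbabilityMeasure γ]
    (hfst : γ.map Prod.fst = μ) (hsnd : γ.map Prod.snd = ν) :
    W2sq μ ν ≤ 2⁻¹ * transportCost γ :=
  iInf₂_le γ ⟨inferInstance, hfst, hsnd⟩

lemma LPcost_eq_sum_transportCost (H : ℕ)
    (μ : Fin (H + 1) → Measure (EuclideanSpace ℝ (Fin d) × EuclideanSpace ℝ (Fin d))) :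
    LPcost H μ = ((H : ℝ≥0∞) + 1) / 2 * ∑ h, transportCost (μ h) :=
  rfl

theorem W2sq_le_LPcost {H : ℕ} {μsrc μtgt : Measure (EuclideanSpace ℝ (Fin d))}
    {ν : Fin (H + 1) → Measure (EuclideanSpace ℝ (Fin d) × EuclideanSpace ℝ (Fin d))}
    (hν : LPfeasible H μsrc μtgt ν) : W2sq μsrc μtgt ≤ LPcost H ν := by
  obtain ⟨hprob, hsrc, hchain, htgt⟩ := hν
  obtain ⟨γ, hγ, hfst, hsnd, hcost⟩ :=
    exists_coupling_transportCost_le_of_chain H ν hprob hchain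
  have hH : ((H : ℝ≥0∞) + 1) ≠ 0 := by positivity
  calc W2sq μsrc μtgt ≤ 2⁻¹ * transportCost γ :=
        W2sq_le_transportCost γ (hfst.trans hsrc) (hsnd.trans htgt)
    _ = ((H : ℝ≥0∞) + 1) / 2 * (transportCost γ / (H + 1)) := by
        rw [ENNReal.div_eq_inv_mul, mul_assoc, ENNReal.mul_div_cancel hH (by simp)]
    _ ≤ LPcost H ν := by
        rw [LPcost_eq_sum_transportCost]
        gcongr

end Euclidean

lemma measurable_trajComp {α : Type*} [MeasurableSpace α] {π : ℕ → α → α} :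
    ∀ {n : ℕ}, (∀ k < n, Measurable (π k)) → Measurable (trajComp π n)
  | 0, _ => measurable_id
  | n + 1, hπ => (hπ n n.lt_succ_self).comp (measurable_trajComp fun k hk => hπ k (by omega))

section Occupancy
variable {d H : ℕ} {μsrc : Measure (EuclideanSpace ℝ (Fin d))}
  {π : ℕ → EuclideanSpace ℝ (Fin d) → EuclideanSpace ℝ (Fin d)}

lemma LPfeasible_occupancy [IsProbabilityMeasure μsrc] {μtgt : Measure (EuclideanSpace ℝ (Fin d))}
    (hmeas : ∀ h ≤ H, Measurable (π h)) (hfeas : μsrc.map (trajComp π (H + 1)) = μtgt) :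
    LPfeasible H μsrc μtgt fun h => μsrc.map fun x => (trajComp π h x, trajComp π (h + 1) x) := by
  have hT : ∀ h ≤ H + 1, Measurable (trajComp π h) := fun h hh =>
    measurable_trajComp fun k hk => hmeas k (by omega)
  refine ⟨fun h => Measure.isProbabilityMeasure_map ?_, ?_, fun h => ?_, ?_⟩
  · exact ((hT h (by omega)).prodMk (hT (h + 1) (by omega))).aemeasurable
  · exact (Measure.fst_map_prodMk (hT 1 (by omega))).trans Measure.map_id
  · exact (Measure.snd_map_prodMk (hT h (by omega))).trans
      (Measure.fst_map_prodMk (hT (h + 2) (by omega))).symm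
  · exact (Measure.snd_map_prodMk (hT H (by omega))).trans hfeas

lemma LPcost_occupancy (hmeas : ∀ h ≤ H, Measurable (π h)) :
    LPcost H (fun h => μsrc.map fun x => (trajComp π h x, trajComp π (h + 1) x)) =
      ((H : ℝ≥0∞) + 1) / 2 * ∑ h ∈ Finset.range (H + 1),
        ∫⁻ x, (‖trajComp π (h + 1) x - trajComp π h x‖₊ : ℝ≥0∞) ^ 2 ∂μsrc := by
  have hT : ∀ h ≤ H + 1, Measurable (trajComp π h) := fun h hh =>
    measurable_trajComp fun k hk => hmeas k (by omega)
  rw [LPcost_eq_sum_transportCost, ← Fin.sum_univ_eq_sum_range]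
  congr 1
  refine Finset.sum_congr rfl fun h _ => ?_
  rw [transportCost_map μsrc (hT h (by omega)) (hT (h + 1) (by omega))]
  exact lintegral_congr fun x => by rw [← nnnorm_neg, neg_sub]

end Occupancy

theorem stmt7_general {d : ℕ} (H : ℕ)
    (μsrc μtgt : Measure (EuclideanSpace ℝ (Fin d)))
    [IsProbabilityMeasure μsrc]
    (π : ℕ → EuclideanSpace ℝ (Fin d) → EuclideanSpace ℝ (Fin d))
    (hmeas : ∀ h ≤ H, Measurable (π h))
    (hfeas : μsrc.map (trajComp π (H + 1)) = μtgt)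
    (hopt : ((H : ℝ≥0∞) + 1) / 2 *
        ∑ h ∈ Finset.range (H + 1),
          ∫⁻ x, (‖trajComp π (h + 1) x - trajComp π h x‖₊ : ℝ≥0∞) ^ 2 ∂μsrc =
      W2sq μsrc μtgt)
    (μstar : Fin (H + 1) → Measure (EuclideanSpace ℝ (Fin d) × EuclideanSpace ℝ (Fin d)))
    (hμstar : ∀ h : Fin (H + 1), μstar h =
      μsrc.map (fun x => (trajComp π h.val x, trajComp π (h.val + 1) x))) :
    LPfeasible H μsrc μtgt μstar ∧
    LPcost H μstar = W2sq μsrc μtgt ∧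
    ∀ ν, LPfeasible H μsrc μtgt ν → LPcost H μstar ≤ LPcost H ν := by
  obtain rfl : μstar = _ := funext hμstar
  have hcost := (LPcost_occupancy hmeas).trans hopt
  exact ⟨LPfeasible_occupancy hmeas hfeas, hcost, fun ν hν => hcost ▸ W2sq_le_LPcost hν⟩

/-- the occupancy measures `μ⋆_h = (π̄⋆_{h−1}, π̄⋆_h)_# μsrc` of an optimal
feasible policy form a feasible family for the dynamic primal LP with cost `W₂²(μsrc, μtgt)`,
hence an optimal solution. -/
theorem stmt7 {d : ℕ} (hd : 1 ≤ d) (H : ℕ)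
    (μsrc μtgt : Measure (EuclideanSpace ℝ (Fin d)))
    [IsProbabilityMeasure μsrc] [IsProbabilityMeasure μtgt]
    (h2src : ∫⁻ x, (‖x‖₊ : ℝ≥0∞) ^ 2 ∂μsrc ≠ ⊤)
    (h2tgt : ∫⁻ x, (‖x‖₊ : ℝ≥0∞) ^ 2 ∂μtgt ≠ ⊤)
    (π : ℕ → EuclideanSpace ℝ (Fin d) → EuclideanSpace ℝ (Fin d))
    (hmeas : ∀ h ≤ H, Measurable (π h))
    (hfeas : μsrc.map (trajComp π (H + 1)) = μtgt)
    (hopt : ((H : ℝ≥0∞) + 1) / 2 *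
        ∑ h ∈ Finset.range (H + 1),
          ∫⁻ x, (‖trajComp π (h + 1) x - trajComp π h x‖₊ : ℝ≥0∞) ^ 2 ∂μsrc =
      W2sq μsrc μtgt)
    (μstar : Fin (H + 1) → Measure (EuclideanSpace ℝ (Fin d) × EuclideanSpace ℝ (Fin d)))
    (hμstar : ∀ h : Fin (H + 1), μstar h =
      μsrc.map (fun x => (trajComp π h.val x, trajComp π (h.val + 1) x))) :
    LPfeasible H μsrc μtgt μstar ∧
    LPcost H μstar = W2sq μsrc μtgt ∧
    ∀ ν, LPfeasible H μsrc μtgt ν → LPcost H μstar ≤ LPcost H ν :=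
  stmt7_general H μsrc μtgt π hmeas hfeas hopt μstar hμstar
end

section
/- Let Ω ⊂ ℝ^d be a nonempty compact convex set, let μ_src and μ_tgt be Borel probability measures supported in Ω, and let H ∈ ℕ. Let π⋆_0,…,π⋆_H : Ω → Ω be measurable maps with (π̄⋆_H)_# μ_src = μ_tgt, and let V⋆ = (V⋆_0,…,V⋆_{H+1}) be feasible for the dynamic dual LP on Ω with horizon H, such that the dynamic cost of the policy equals the dual objective ∫V⋆_0 dμ_src − ∫V⋆_{H+1} dμ_tgt. Then for every h ∈ {0,…,H}, the complementary slackness equality V⋆_h(x) − V⋆_{h+1}(π⋆_h(x)) = ((H+1)/2)‖π⋆_h(x) − x‖² holds for (π̄⋆_{h−1})_# μ_src-almost every x ∈ Ω. -/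
/-! The dual constraint `V_k x ≤ c(x, y) + V_{k+1} y` makes the slack of every step nonnegative,
while the integrals of the slacks along the trajectory telescope to (primal cost) − (dual
objective) = 0. Hence each slack vanishes almost everywhere along the trajectory. -/

open MeasureTheory

section ComplementarySlackness

variable {α : Type*} {π : ℕ → α → α} {cost : α → α → ℝ} {V : ℕ → α → ℝ}

def slack (cost : α → α → ℝ) (V : ℕ → α → ℝ) (π : ℕ → α → α) (k : ℕ) (x : α) : ℝ :=
  cost x (π k x) + V (k + 1) (π k x) - V k x

theorem slack_nonneg {k : ℕ} (hfeas : ∀ x y, V k x ≤ cost x y + V (k + 1) y) (x : α) :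
    0 ≤ slack cost V π k x :=
  sub_nonneg.mpr (hfeas x (π k x))

variable [MeasurableSpace α]

theorem measurable_trajComp_s13 {n : ℕ} (hπ : ∀ k < n, Measurable (π k)) :
    Measurable (trajComp π n) := by
  induction n with
  | zero => exact measurable_id
  | succ n ih => exact (hπ n n.lt_succ_self).comp (ih fun k hk => hπ k (hk.trans n.lt_succ_self))

theorem integrable_comp_of_bounded {β : Type*} [MeasurableSpace β] {μ : Measure α}
    [IsFiniteMeasure μ] {f : β → ℝ} {g : α → β} (hf : Measurable f)
    (hf_bdd : ∃ C, ∀ y, ‖f y‖ ≤ C) (hg : Measurable g) : Integrable (fun x => f (g x)) μ :=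
  let ⟨C, hC⟩ := hf_bdd
  .of_bound (hf.comp hg).aestronglyMeasurable C (ae_of_all _ fun x => hC (g x))

theorem integral_slack_trajComp {μ : Measure α} {k : ℕ}
    (hcost : Integrable (fun x => cost (trajComp π k x) (trajComp π (k + 1) x)) μ)
    (hV₀ : Integrable (fun x => V k (trajComp π k x)) μ)
    (hV₁ : Integrable (fun x => V (k + 1) (trajComp π (k + 1) x)) μ) :
    ∫ x, slack cost V π k (trajComp π k x) ∂μ =
      ∫ x, cost (trajComp π k x) (trajComp π (k + 1) x) ∂μ +
        (∫ x, V (k + 1) (trajComp π (k + 1) x) ∂μ - ∫ x, V k (trajComp π k x) ∂μ) := by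
  rw [← add_sub_assoc, ← integral_add hcost hV₁]
  exact integral_sub (hcost.add hV₁) hV₀

theorem slack_ae_eq_zero {μ : Measure α} [IsFiniteMeasure μ] {n : ℕ}
    (hπ : ∀ k < n, Measurable (π k)) (hcost : Measurable (Function.uncurry cost))
    (hcost_bdd : ∃ C, ∀ p, ‖Function.uncurry cost p‖ ≤ C)
    (hV : ∀ k ≤ n, Measurable (V k)) (hV_bdd : ∀ k ≤ n, ∃ C, ∀ x, ‖V k x‖ ≤ C)
    (hfeas : ∀ k < n, ∀ x y, V k x ≤ cost x y + V (k + 1) y)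
    (hgap : ∑ k ∈ Finset.range n, ∫ x, cost (trajComp π k x) (trajComp π (k + 1) x) ∂μ =
      ∫ x, V 0 x ∂μ - ∫ x, V n x ∂(μ.map (trajComp π n))) :
    ∀ k < n, slack cost V π k =ᵐ[μ.map (trajComp π k)] 0 := by
  set T := trajComp π
  have hT : ∀ k ≤ n, Measurable (T k) := fun k hk => measurable_trajComp_s13 fun j hj => hπ j (by omega)
  have hV_int : ∀ k ≤ n, ∀ {g : α → α}, Measurable g → ∀ (ν : Measure α) [IsFiniteMeasure ν],
      Integrable (fun x => V k (g x)) ν := fun k hk _ hg _ _ =>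
    integrable_comp_of_bounded (hV k hk) (hV_bdd k hk) hg
  have hcost_int : ∀ {g g' : α → α}, Measurable g → Measurable g' →
      ∀ (ν : Measure α) [IsFiniteMeasure ν], Integrable (fun x => cost (g x) (g' x)) ν :=
    fun hg hg' _ _ => integrable_comp_of_bounded hcost hcost_bdd (hg.prodMk hg')
  have hslack_int : ∀ k < n, Integrable (slack cost V π k) (μ.map (T k)) := fun k hk =>
    ((hcost_int measurable_id (hπ k hk) _).add (hV_int (k + 1) hk (hπ k hk) _)).sub
      (hV_int k hk.le measurable_id _)
  have hslack_integral : ∀ k < n, ∫ x, slack cost V π k x ∂(μ.map (T k)) =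
      ∫ x, cost (T k x) (T (k + 1) x) ∂μ +
        (∫ x, V (k + 1) (T (k + 1) x) ∂μ - ∫ x, V k (T k x) ∂μ) := fun k hk => by
    rw [integral_map (hT k hk.le).aemeasurable (hslack_int k hk).aestronglyMeasurable]
    exact integral_slack_trajComp (hcost_int (hT k hk.le) (hT (k + 1) hk) μ)
      (hV_int k hk.le (hT k hk.le) μ) (hV_int (k + 1) hk (hT (k + 1) hk) μ)
  have hsum : ∑ k ∈ Finset.range n, ∫ x, slack cost V π k x ∂(μ.map (T k)) = 0 := by
    rw [Finset.sum_congr rfl fun k hk => hslack_integral k (Finset.mem_range.mp hk),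
      Finset.sum_add_distrib, Finset.sum_range_sub (fun k => ∫ x, V k (T k x) ∂μ), hgap,
      integral_map (hT n le_rfl).aemeasurable (hV n le_rfl).aestronglyMeasurable]
    simp only [T, trajComp, id, sub_add_sub_cancel', sub_self]
  have hslack_integral_eq_zero := (Finset.sum_eq_zero_iff_of_nonneg fun k hk =>
    integral_nonneg (slack_nonneg (hfeas k (Finset.mem_range.mp hk)))).mp hsum
  intro k hk
  exact (integral_eq_zero_iff_of_nonneg (slack_nonneg (hfeas k hk)) (hslack_int k hk)).mp
    (hslack_integral_eq_zero k (Finset.mem_range.mpr hk))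

end ComplementarySlackness

theorem stmt13_general {d : ℕ} (Ω : Set (EuclideanSpace ℝ (Fin d)))
    (hcomp : IsCompact Ω)
    (μsrc μtgt : Measure Ω) [IsProbabilityMeasure μsrc]
    (H : ℕ) (π : ℕ → Ω → Ω) (hπmeas : ∀ h ≤ H, Measurable (π h))
    (hπfeas : μsrc.map (trajComp π (H + 1)) = μtgt)
    (V : ℕ → Ω → ℝ) (hVcont : ∀ h ≤ H + 1, Continuous (V h))
    (hVfeas : ∀ h ≤ H, ∀ x y : Ω,
      V h x ≤ ((H : ℝ) + 1) / 2 * ‖x.val - y.val‖ ^ 2 + V (h + 1) y)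
    (hzero : ((H : ℝ) + 1) / 2 *
        ∑ h ∈ Finset.range (H + 1),
          ∫ x, ‖(trajComp π (h + 1) x).val - (trajComp π h x).val‖ ^ 2 ∂μsrc =
      ∫ x, V 0 x ∂μsrc - ∫ x, V (H + 1) x ∂μtgt) :
    ∀ h ≤ H, ∀ᵐ x ∂(μsrc.map (trajComp π h)),
      V h x - V (h + 1) (π h x) = ((H : ℝ) + 1) / 2 * ‖(π h x).val - x.val‖ ^ 2 := by
  have := isCompact_iff_compactSpace.mp hcomp
  have hcost : Continuous fun p : Ω × Ω => ((H : ℝ) + 1) / 2 * ‖p.2.val - p.1.val‖ ^ 2 := by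
    fun_prop
  have hslack := slack_ae_eq_zero (μ := μsrc) (n := H + 1) (V := V)
    (cost := fun x y => ((H : ℝ) + 1) / 2 * ‖y.val - x.val‖ ^ 2)
    (fun k hk => hπmeas k (by omega))
    hcost.measurable (hcost.bounded_above_of_compact_support (.of_compactSpace _))
    (fun k hk => (hVcont k hk).measurable)
    (fun k hk => (hVcont k hk).bounded_above_of_compact_support (.of_compactSpace _))
    (fun k hk x y => by rw [norm_sub_rev]; exact hVfeas k (by omega) x y)
    (by simpa only [hπfeas, Finset.mul_sum, integral_const_mul] using hzero)
  intro h hh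
  filter_upwards [hslack h (by omega)] with x hx
  simp only [slack, Pi.zero_apply] at hx
  linarith

/-- complementary slackness. If a feasible policy's dynamic cost equals the
objective of a feasible dynamic dual family `V⋆`, then for every `h ≤ H`,
`V⋆_h(x) − V⋆_{h+1}(π⋆_h(x)) = ((H+1)/2)‖π⋆_h(x) − x‖²` holds for
`(π̄⋆_{h−1})_# μsrc`-a.e. `x ∈ Ω`. -/
theorem stmt13 {d : ℕ} (Ω : Set (EuclideanSpace ℝ (Fin d)))
    (hne : Ω.Nonempty) (hcomp : IsCompact Ω) (hconv : Convex ℝ Ω)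
    (μsrc μtgt : Measure Ω) [IsProbabilityMeasure μsrc] [IsProbabilityMeasure μtgt]
    (H : ℕ) (π : ℕ → Ω → Ω) (hπmeas : ∀ h ≤ H, Measurable (π h))
    (hπfeas : μsrc.map (trajComp π (H + 1)) = μtgt)
    (V : ℕ → Ω → ℝ) (hVcont : ∀ h ≤ H + 1, Continuous (V h))
    (hVfeas : ∀ h ≤ H, ∀ x y : Ω,
      V h x ≤ ((H : ℝ) + 1) / 2 * ‖x.val - y.val‖ ^ 2 + V (h + 1) y)
    (hzero : ((H : ℝ) + 1) / 2 *
        ∑ h ∈ Finset.range (H + 1),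
          ∫ x, ‖(trajComp π (h + 1) x).val - (trajComp π h x).val‖ ^ 2 ∂μsrc =
      ∫ x, V 0 x ∂μsrc - ∫ x, V (H + 1) x ∂μtgt) :
    ∀ h ≤ H, ∀ᵐ x ∂(μsrc.map (trajComp π h)),
      V h x - V (h + 1) (π h x) = ((H : ℝ) + 1) / 2 * ‖(π h x).val - x.val‖ ^ 2 :=
  stmt13_general Ω hcomp μsrc μtgt H π hπmeas hπfeas V hVcont hVfeas hzero
end
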